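/- arXiv:1511.09470 — 5 statements merged into one kernel-verified Lean document; each statement's English description precedes it below -/
import Mathlib

section
/- Let f : ℝ → ℂ be a continuous odd function in the Wiener space and λ > 0. Then Z_λ f(x,γ) = 0 for all (x,γ) ∈ (1/2)ℤ² that do not lie in ℤ² + (1/2,1/2); in particular Z_λ f vanishes at (0,0), (1/2, 0), and (0, 1/2). -/
open MeasureTheory Complex Real FourierTransform

/-- The Zak transform `Z_λ f (x, γ) = √λ ∑_{k∈ℤ} f(λ(x+k)) e^{-2πikγ}`. -/
noncomputable def zak (lam : ℝ) (f : ℝ → ℂ) (x γ : ℝ) : ℂ :=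
  (Real.sqrt lam : ℂ) *
    ∑' k : ℤ, f (lam * (x + k)) * Complex.exp (-2 * Real.pi * Complex.I * k * γ)

/-- Membership in the Wiener space `W(ℝ)`:
`∑_{k∈ℤ} sup_{x∈[0,1]} |f(x+k)| < ∞`. -/
def InWiener (f : ℝ → ℂ) : Prop :=
  Summable (fun k : ℤ => ⨆ x : Set.Icc (0:ℝ) 1, ‖f ((x : ℝ) + k)‖)

/-!
Reindexing the lattice sum gives the quasi-periodicity `Z(x + j, γ) = e^{2πijγ} Z(x, γ)`,
the periodicity `Z(x, γ + n) = Z(x, γ)` and, for odd `f`, the symmetry `Z(-x, -γ) = -Z(x, γ)`.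
At `(x, γ) = (m/2, n/2)` we have `(-x, -γ) = (x - m, γ - n)`, so `-Z(x, γ) = e^{-πimn} Z(x, γ)`,
and the phase is `1` unless `m` and `n` are both odd.
-/

theorem zak_add_int_left (lam : ℝ) (f : ℝ → ℂ) (x γ : ℝ) (j : ℤ) :
    zak lam f (x + j) γ = Complex.exp (2 * π * I * j * γ) * zak lam f x γ := by
  unfold zak
  rw [mul_left_comm, ← tsum_mul_left (a := Complex.exp (2 * π * I * j * γ))]
  refine congrArg _ ?_
  rw [← (Equiv.subRight j).tsum_eq]
  congr 1
  funext k
  rw [Equiv.subRight_apply, mul_left_comm, ← Complex.exp_add]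
  push_cast
  ring_nf

theorem zak_add_int_right (lam : ℝ) (f : ℝ → ℂ) (x γ : ℝ) (n : ℤ) :
    zak lam f x (γ + n) = zak lam f x γ := by
  unfold zak
  congr 2
  funext k
  rw [show -2 * π * I * k * ((γ + n : ℝ) : ℂ)
      = -2 * π * I * k * γ + ((-(k * n) : ℤ) : ℂ) * (2 * π * I) by push_cast; ring,
    Complex.exp_add, Complex.exp_int_mul_two_pi_mul_I, mul_one]

theorem zak_neg_neg_of_odd (lam : ℝ) {f : ℝ → ℂ} (hodd : ∀ x, f (-x) = -f x) (x γ : ℝ) :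
    zak lam f (-x) (-γ) = -zak lam f x γ := by
  unfold zak
  rw [← mul_neg, ← tsum_neg, ← (Equiv.neg ℤ).tsum_eq]
  congr 2
  funext k
  simp only [Equiv.neg_apply, Int.cast_neg, Complex.ofReal_neg]
  rw [show lam * (-x + -(k : ℝ)) = -(lam * (x + k)) by ring, hodd]
  ring_nf

theorem exp_two_pi_I_mul_neg_int_mul_half_eq_one {m n : ℤ} (hmn : ¬(Odd m ∧ Odd n)) :
    Complex.exp (2 * π * I * (-m : ℤ) * ((n / 2 : ℝ) : ℂ)) = 1 := by
  obtain ⟨c, hc⟩ := Int.not_odd_iff_even.mp (Int.odd_mul.not.mpr hmn)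
  have hc' : (m : ℂ) * n = c + c := by exact_mod_cast hc
  rw [show 2 * π * I * (-m : ℤ) * ((n / 2 : ℝ) : ℂ) = ((-c : ℤ) : ℂ) * (2 * π * I) by
    push_cast; linear_combination (-(π * I)) * hc']
  exact Complex.exp_int_mul_two_pi_mul_I _

theorem zak_odd_zero_at_half_lattice_general (f : ℝ → ℂ)
    (hodd : ∀ x, f (-x) = -f x) (lam : ℝ) :
    ∀ m n : ℤ, ¬(Odd m ∧ Odd n) → zak lam f ((m : ℝ) / 2) ((n : ℝ) / 2) = 0 := by
  intro m n hmn
  have hneg : zak lam f (-(m / 2 : ℝ)) (-(n / 2 : ℝ)) = zak lam f (m / 2) (n / 2) := by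
    rw [show -(m / 2 : ℝ) = m / 2 + ((-m : ℤ) : ℝ) by push_cast; ring,
      show -(n / 2 : ℝ) = n / 2 + ((-n : ℤ) : ℝ) by push_cast; ring,
      zak_add_int_right, zak_add_int_left, exp_two_pi_I_mul_neg_int_mul_half_eq_one hmn, one_mul]
  rw [zak_neg_neg_of_odd lam hodd] at hneg
  linear_combination -hneg / 2

theorem zak_odd_zero_at_half_lattice (f : ℝ → ℂ) (hf : Continuous f)
    (hodd : ∀ x, f (-x) = -f x) (hW : InWiener f) (lam : ℝ) (hlam : 0 < lam) :
    ∀ m n : ℤ, ¬(Odd m ∧ Odd n) → zak lam f ((m : ℝ) / 2) ((n : ℝ) / 2) = 0 :=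
  zak_odd_zero_at_half_lattice_general f hodd lam
end

section
/- Let f : ℝ → ℂ be continuous with f and its Fourier transform f̂ both in the Wiener space, and let λ > 0. Then for all x, γ ∈ ℝ, Z_λ f(x,γ) = e^{2πixγ} Z_{1/λ} f̂(γ, −x), where both Zak transform series converge absolutely. -/
open MeasureTheory Complex Real FourierTransform

/-!
Poisson summation applied to `g t = f (λ t) e^{-2πitγ}`, whose Fourier transform is
`ĝ ξ = λ⁻¹ f̂ ((γ + ξ) / λ)`, turns `∑ₙ g (x + n) = ∑ₙ ĝ n e^{2πinx}` into the identity after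
multiplying by `√λ`. The Wiener condition on `f` bounds the translates of `g` on compacts
uniformly enough for Poisson summation, and the one on `f̂` makes `ĝ` summable over `ℤ`; both
reduce to the fact that a Wiener sequence stays summable along any progression `λ n + c`, since
windows of bounded width overlap boundedly often.
-/

lemma summable_of_le_sum_of_bounded_overlap {ι κ : Type*} {S : κ → ℝ} {g : ι → ℝ}
    (hS : Summable S) (hS0 : ∀ j, 0 ≤ S j) (hg0 : ∀ n, 0 ≤ g n) {F : ι → Finset κ}
    (hgF : ∀ n, g n ≤ ∑ j ∈ F n, S j) {N : ℕ}
    (hN : ∀ j, ∃ v : Finset ι, v.card ≤ N ∧ ∀ n, j ∈ F n → n ∈ v) :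
    Summable g := by
  classical
  refine summable_of_sum_le hg0 (c := N * ∑' j, S j) fun u => ?_
  have hcard : ∀ j, (u.filter fun n => j ∈ F n).card ≤ N := fun j => by
    obtain ⟨v, hvN, hv⟩ := hN j
    exact (Finset.card_le_card fun n hn => hv n (Finset.mem_filter.mp hn).2).trans hvN
  calc ∑ n ∈ u, g n ≤ ∑ n ∈ u, ∑ j ∈ F n, S j := Finset.sum_le_sum fun n _ => hgF n
    _ = ∑ j ∈ u.biUnion F, ∑ n ∈ u.filter (fun n => j ∈ F n), S j :=
        Finset.sum_comm' fun n j => by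
          simp only [Finset.mem_filter, Finset.mem_biUnion]
          exact ⟨fun h => ⟨h, n, h⟩, And.left⟩
    _ ≤ ∑ j ∈ u.biUnion F, N * S j := Finset.sum_le_sum fun j _ => by
        rw [Finset.sum_const, nsmul_eq_mul]
        gcongr
        exacts [hS0 j, hcard j]
    _ ≤ N * ∑' j, S j := by
        rw [← Finset.mul_sum]
        gcongr
        exact hS.sum_le_tsum _ fun j _ => hS0 j

noncomputable def wienerSup (f : ℝ → ℂ) (k : ℤ) : ℝ := ⨆ x : Set.Icc (0:ℝ) 1, ‖f ((x : ℝ) + k)‖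

lemma wienerSup_nonneg (f : ℝ → ℂ) (k : ℤ) : 0 ≤ wienerSup f k :=
  Real.iSup_nonneg fun _ => norm_nonneg _

lemma Continuous.norm_le_wienerSup {f : ℝ → ℂ} (hf : Continuous f) (k : ℤ) {x : ℝ}
    (hx : x ∈ Set.Icc (0:ℝ) 1) : ‖f (x + k)‖ ≤ wienerSup f k := by
  have hbdd := ((isCompact_Icc (a := (0:ℝ)) (b := 1)).image
    (hf.comp (continuous_add_const (k : ℝ))).norm).bddAbove
  rw [Set.image_eq_range] at hbdd
  exact le_ciSup hbdd ⟨x, hx⟩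

lemma Continuous.norm_le_sum_wienerSup {f : ℝ → ℂ} (hf : Continuous f) {a b y : ℝ}
    (ha : a ≤ y) (hb : y ≤ b) : ‖f y‖ ≤ ∑ j ∈ Finset.Icc ⌊a⌋ ⌊b⌋, wienerSup f j := by
  calc ‖f y‖ = ‖f (Int.fract y + ⌊y⌋)‖ := by rw [Int.fract_add_floor]
    _ ≤ wienerSup f ⌊y⌋ :=
        hf.norm_le_wienerSup _ ⟨Int.fract_nonneg y, (Int.fract_lt_one y).le⟩
    _ ≤ _ := Finset.single_le_sum (fun j _ => wienerSup_nonneg f j)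
        (Finset.mem_Icc.mpr ⟨Int.floor_mono ha, Int.floor_mono hb⟩)

namespace InWiener

variable {f : ℝ → ℂ}

lemma summable_of_le_sum_wienerSup (hW : InWiener f) {lam : ℝ} (hlam : 0 < lam) (a b : ℝ)
    {g : ℤ → ℝ} (hg0 : ∀ n, 0 ≤ g n)
    (hg : ∀ n : ℤ, g n ≤ ∑ j ∈ Finset.Icc ⌊a + lam * n⌋ ⌊b + lam * n⌋, wienerSup f j) :
    Summable g := by
  set M := ⌈(1 + b - a) / lam⌉₊
  -- a window `[⌊a + lam * n⌋, ⌊b + lam * n⌋]` contains `j` only for `M + 1` consecutive `n`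
  refine summable_of_le_sum_of_bounded_overlap hW (wienerSup_nonneg f) hg0 hg (N := M + 1)
    fun j => ⟨Finset.Icc ⌈(j - b) / lam⌉ (⌈(j - b) / lam⌉ + M), by simp; omega, fun n hn => ?_⟩
  obtain ⟨hjn, hnj⟩ := Finset.mem_Icc.mp hn
  have hlow : (j : ℝ) ≤ b + lam * n := (Int.cast_le.mpr hnj).trans (Int.floor_le _)
  have hupp : a + lam * n < j + 1 := by
    have : (⌊a + lam * n⌋ : ℝ) ≤ j := by exact_mod_cast hjn
    linarith [Int.lt_floor_add_one (a + lam * n)]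
  have hceil : (j - b) / lam ≤ ⌈(j - b) / lam⌉ := Int.le_ceil _
  have hM : (1 + b - a) / lam ≤ M := Nat.le_ceil _
  have hsplit : (j + 1 - a) / lam = (j - b) / lam + (1 + b - a) / lam := by ring
  refine Finset.mem_Icc.mpr ⟨Int.ceil_le.mpr ((div_le_iff₀ hlam).mpr (by linarith)), ?_⟩
  have : (n : ℝ) < (j + 1 - a) / lam := (lt_div_iff₀ hlam).mpr (by linarith)
  exact_mod_cast (by linarith : (n : ℝ) ≤ ⌈(j - b) / lam⌉ + M)

lemma summable_norm_comp_mul (hW : InWiener f) (hf : Continuous f) {lam : ℝ} (hlam : 0 < lam)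
    (x : ℝ) : Summable fun n : ℤ => ‖f (lam * (x + n))‖ :=
  hW.summable_of_le_sum_wienerSup hlam (lam * x) (lam * x) (fun _ => norm_nonneg _)
    fun n => hf.norm_le_sum_wienerSup (mul_add lam x n).ge (mul_add lam x n).le

lemma integrable (hW : InWiener f) (hf : Continuous f) : Integrable f := by
  refine Real.integrable_of_summable_norm_Icc (f := ⟨f, hf⟩) ?_
  refine Summable.of_nonneg_of_le (f := wienerSup f) (fun _ => norm_nonneg _) (fun n => ?_) hW
  rw [ContinuousMap.norm_le _ (wienerSup_nonneg f n)]
  exact fun ⟨x, hx⟩ => hf.norm_le_wienerSup n hx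

lemma summable_norm_restrict (hW : InWiener f) (hf : Continuous f) {lam : ℝ} (hlam : 0 < lam)
    {g : C(ℝ, ℂ)} (hg : ∀ t, ‖g t‖ ≤ ‖f (lam * t)‖) (K : TopologicalSpace.Compacts ℝ) :
    Summable fun n : ℤ => ‖(g.comp (ContinuousMap.addRight (n : ℝ))).restrict K‖ := by
  obtain ⟨r, hr⟩ := K.isCompact.isBounded.subset_closedBall 0
  rw [Real.closedBall_eq_Icc, zero_sub, zero_add] at hr
  refine hW.summable_of_le_sum_wienerSup hlam (-(lam * r)) (lam * r) (fun _ => norm_nonneg _)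
    fun n => ?_
  rw [ContinuousMap.norm_le _ (Finset.sum_nonneg fun j _ => wienerSup_nonneg f j)]
  rintro ⟨y, hy⟩
  obtain ⟨hy1, hy2⟩ := hr hy
  exact (hg (y + n)).trans (hf.norm_le_sum_wienerSup (by nlinarith) (by nlinarith))

end InWiener

lemma MeasureTheory.Integrable.continuous_fourier {f : ℝ → ℂ} (hf : Integrable f) :
    Continuous (𝓕 f) :=
  VectorFourier.fourierIntegral_continuous Real.continuous_fourierChar continuous_inner hf

lemma fourier_comp_mul_mul_exp (f : ℝ → ℂ) {lam : ℝ} (hlam : 0 < lam) (γ ξ : ℝ) :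
    𝓕 (fun t : ℝ => f (lam * t) * Complex.exp (-2 * Real.pi * Complex.I * t * γ)) ξ
      = (1 / lam : ℝ) * 𝓕 f (1 / lam * (γ + ξ)) := by
  simp only [Real.fourier_real_eq_integral_exp_smul, smul_eq_mul]
  have hphase : ∀ t : ℝ, Complex.exp (↑(-2 * Real.pi * t * ξ) * Complex.I) *
      (f (lam * t) * Complex.exp (-2 * Real.pi * Complex.I * t * γ))
      = Complex.exp (↑(-2 * Real.pi * (lam * t) * ((ξ + γ) / lam)) * Complex.I) * f (lam * t) := by
    intro t
    have : (lam : ℂ) ≠ 0 := Complex.ofReal_ne_zero.mpr hlam.ne'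
    rw [mul_left_comm, ← Complex.exp_add, mul_comm]
    congr 2
    push_cast
    field_simp
    ring
  simp_rw [hphase]
  rw [Measure.integral_comp_mul_left
    (fun u : ℝ => Complex.exp (↑(-2 * Real.pi * u * ((ξ + γ) / lam)) * Complex.I) * f u),
    abs_of_pos (inv_pos.mpr hlam), Complex.real_smul, one_div, inv_mul_eq_div, add_comm]

lemma tsum_comp_mul_mul_exp_eq_tsum_fourier (f : ℝ → ℂ) (hf : Continuous f) (hW : InWiener f)
    (hWhat : InWiener (𝓕 f)) {lam : ℝ} (hlam : 0 < lam) (x γ : ℝ) :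
    ∑' n : ℤ, f (lam * (x + n)) * Complex.exp (-2 * Real.pi * Complex.I * n * γ)
      = Complex.exp (2 * Real.pi * Complex.I * x * γ) * ((1 / lam : ℝ) *
        ∑' n : ℤ, 𝓕 f (1 / lam * (γ + n)) *
          Complex.exp (-2 * Real.pi * Complex.I * n * ((-x : ℝ) : ℂ))) := by
  let g : C(ℝ, ℂ) := ⟨fun t => f (lam * t) * Complex.exp (-2 * Real.pi * Complex.I * t * γ),
    by fun_prop⟩
  have hFf := (hW.integrable hf).continuous_fourier
  have hFg (ξ : ℝ) : 𝓕 ⇑g ξ = (1 / lam : ℝ) * 𝓕 f (1 / lam * (γ + ξ)) :=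
    fourier_comp_mul_mul_exp f hlam γ ξ
  have h_norm := hW.summable_norm_restrict hf hlam (g := g) fun t => by simp [g, Complex.norm_exp]
  have h_sum : Summable fun n : ℤ => 𝓕 ⇑g n := by
    simp only [hFg]
    exact ((hWhat.summable_norm_comp_mul hFf (one_div_pos.mpr hlam) γ).of_norm).mul_left _
  have hpoisson := Real.tsum_eq_tsum_fourier h_norm h_sum x
  have hlhs (n : ℤ) : g (x + n) = Complex.exp (-2 * Real.pi * Complex.I * x * γ) *
      (f (lam * (x + n)) * Complex.exp (-2 * Real.pi * Complex.I * n * γ)) := by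
    simp only [g, ContinuousMap.coe_mk]
    rw [mul_left_comm, ← Complex.exp_add]
    push_cast
    ring_nf
  have hrhs (n : ℤ) : 𝓕 ⇑g n * fourier n (x : UnitAddCircle) = (1 / lam : ℝ) *
      (𝓕 f (1 / lam * (γ + n)) * Complex.exp (-2 * Real.pi * Complex.I * n * ((-x : ℝ) : ℂ))) := by
    rw [hFg, fourier_coe_apply]
    push_cast
    ring_nf
  simp only [hlhs, hrhs, tsum_mul_left] at hpoisson
  have hunit : Complex.exp (2 * Real.pi * Complex.I * x * γ) *
      Complex.exp (-2 * Real.pi * Complex.I * x * γ) = 1 := by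
    rw [← Complex.exp_add, ← Complex.exp_zero]
    ring_nf
  rw [← hpoisson, ← mul_assoc, hunit, one_mul]

theorem zak_fourier (f : ℝ → ℂ) (hf : Continuous f) (hW : InWiener f)
    (hWhat : InWiener (𝓕 f)) (lam : ℝ) (hlam : 0 < lam) :
    ∀ x γ : ℝ,
      Summable (fun k : ℤ => ‖f (lam * (x + k)) * Complex.exp (-2 * Real.pi * Complex.I * k * γ)‖) ∧
      Summable (fun k : ℤ =>
        ‖(𝓕 f) ((1 / lam) * (γ + k)) * Complex.exp (-2 * Real.pi * Complex.I * k * (-x))‖) ∧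
      zak lam f x γ = Complex.exp (2 * Real.pi * Complex.I * x * γ) * zak (1 / lam) (𝓕 f) γ (-x) := by
  intro x γ
  have hFf := (hW.integrable hf).continuous_fourier
  refine ⟨?_, ?_, ?_⟩
  · simpa [Complex.norm_exp] using hW.summable_norm_comp_mul hf hlam x
  · simpa [Complex.norm_exp] using hWhat.summable_norm_comp_mul hFf (one_div_pos.mpr hlam) γ
  have hsqrt : Real.sqrt (1 / lam) = Real.sqrt lam * (1 / lam) := by
    rw [one_div, Real.sqrt_inv, ← div_eq_mul_inv, Real.sqrt_div_self', one_div]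
  rw [zak, zak, tsum_comp_mul_mul_exp_eq_tsum_fourier f hf hW hWhat hlam, hsqrt]
  push_cast
  ring
end

section
/- Let g : ℝ → ℂ be a continuous Wiener-space function with ĝ = −g. Then ∑_{k∈ℤ} (−1)^k g(√2·(k + 3/4)) = 0. -/
open MeasureTheory Complex Real FourierTransform

/-! Put `h t = e^{πit} g(√2 (t + 3/4))`, so that the series is `S = ∑ h n`. Poisson summation
gives `S = ∑ ĥ n`, and `ĥ γ = -(1/√2) e^{3πi(γ - 1/2)/2} g((γ - 1/2)/√2)`. Reindexing, the
even-indexed terms of this dual series sum to `(1/√2) e^{-3πi/4} S` and, since `ĝ = -g` makes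
`g` even, the odd-indexed ones to `(1/√2) e^{3πi/4} S`; as `e^{-3πi/4} + e^{3πi/4} = -√2`, this
gives `S = -S`. The Wiener condition provides the integrability of `g` and the local uniform
summability of the translates of `h` that Poisson summation requires. -/

section Wiener

variable {g : ℝ → ℂ}

lemma norm_le_iSup_Icc_floor (hg : Continuous g) (u : ℝ) :
    ‖g u‖ ≤ ⨆ x : Set.Icc (0:ℝ) 1, ‖g (x + ⌊u⌋)‖ := by
  have hbdd : BddAbove (Set.range fun x : Set.Icc (0:ℝ) 1 => ‖g (x + ⌊u⌋)‖) :=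
    (isCompact_range (by fun_prop)).bddAbove
  simpa using le_ciSup hbdd
    ⟨u - ⌊u⌋, sub_nonneg.2 (Int.floor_le u), by linarith [Int.lt_floor_add_one u]⟩

lemma InWiener.integrable_s7 (hW : InWiener g) (hg : Continuous g) : Integrable g :=
  Real.integrable_of_summable_norm_Icc (f := ⟨g, hg⟩) <| hW.congr fun n => by
    rw [ContinuousMap.norm_eq_iSup_norm]; rfl

lemma InWiener.exists_summable_bound (hW : InWiener g) (hg : Continuous g) {c : ℝ} (hc : 1 ≤ c)
    (R : ℝ) : ∃ B : ℤ → ℝ, Summable B ∧ ∀ (n : ℤ) (u : ℝ), |u - c * n| ≤ R → ‖g u‖ ≤ B n := by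
  set w : ℤ → ℝ := fun k => ⨆ x : Set.Icc (0:ℝ) 1, ‖g (x + k)‖
  have hw : ∀ k, 0 ≤ w k := fun k => Real.iSup_nonneg fun _ => norm_nonneg _
  have hmono : StrictMono fun n : ℤ => ⌊c * n⌋ := by
    refine strictMono_int_of_lt_succ fun n => Int.lt_iff_add_one_le.2 (Int.le_floor.2 ?_)
    have : c * ((n + 1 : ℤ) : ℝ) = c * n + c := by push_cast; ring
    push_cast at this ⊢
    linarith [Int.floor_le (c * n)]
  refine ⟨fun n => ∑ j ∈ Finset.Icc (-⌈R⌉) ⌈R⌉, w (⌊c * n⌋ + j),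
    summable_sum fun j _ =>
      (hW.comp_injective (add_left_injective j)).comp_injective hmono.injective,
    fun n u hu => ?_⟩
  have hj : ⌊u⌋ - ⌊c * n⌋ ∈ Finset.Icc (-⌈R⌉) ⌈R⌉ := by
    obtain ⟨hlo, hhi⟩ := abs_le.1 hu
    have h1 : ⌊c * n⌋ - ⌈R⌉ ≤ ⌊u⌋ := Int.le_floor.2 (by
      push_cast; linarith [Int.floor_le (c * n), Int.le_ceil R])
    have h2 : ⌊u⌋ < ⌊c * n⌋ + ⌈R⌉ + 1 := Int.floor_lt.2 (by
      push_cast; linarith [Int.lt_floor_add_one (c * n), Int.le_ceil R])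
    rw [Finset.mem_Icc]; omega
  calc ‖g u‖ ≤ w ⌊u⌋ := norm_le_iSup_Icc_floor hg u
    _ = w (⌊c * n⌋ + (⌊u⌋ - ⌊c * n⌋)) := by rw [add_sub_cancel]
    _ ≤ _ := Finset.single_le_sum (f := fun j => w (⌊c * n⌋ + j)) (fun j _ => hw _) hj

lemma InWiener.summable_norm_comp_mul_add (hW : InWiener g) (hg : Continuous g) {c : ℝ}
    (hc : 1 ≤ c) (d : ℝ) : Summable fun n : ℤ => ‖g (c * n + d)‖ := by
  obtain ⟨B, hB, hgB⟩ := hW.exists_summable_bound hg hc |d|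
  exact hB.of_nonneg_of_le (fun _ => norm_nonneg _) fun n => hgB n _ (by simp)

lemma InWiener.summable_norm_restrict_s7 (hW : InWiener g) (hg : Continuous g) {c : ℝ} (hc : 1 ≤ c)
    (d : ℝ) {f : C(ℝ, ℂ)} (hf : ∀ t, ‖f t‖ ≤ ‖g (c * t + d)‖) (K : TopologicalSpace.Compacts ℝ) :
    Summable fun n : ℤ => ‖(f.comp (ContinuousMap.addRight n)).restrict K‖ := by
  obtain ⟨r, hr0, hr⟩ := K.isCompact.isBounded.subset_closedBall_lt 0 0
  obtain ⟨B, hB, hgB⟩ := hW.exists_summable_bound hg hc (c * r + |d|)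
  have hB0 (n : ℤ) : 0 ≤ B n := (norm_nonneg _).trans (hgB n (c * n) (by simp; positivity))
  refine hB.of_nonneg_of_le (fun _ => norm_nonneg _) fun n =>
    (ContinuousMap.norm_le _ (hB0 n)).2 fun ⟨x, hx⟩ => (hf _).trans (hgB n _ ?_)
  have hx : |x| ≤ r := by simpa using hr hx
  calc |c * (x + n) + d - c * n| = |c * x + d| := by ring_nf
    _ ≤ |c * x| + |d| := abs_add_le _ _
    _ ≤ c * r + |d| := by
      rw [abs_mul, abs_of_pos (by linarith)]
      gcongr

end Wiener

namespace Real

lemma fourier_cexp_mul (f : ℝ → ℂ) (b γ : ℝ) :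
    𝓕 (fun t : ℝ => cexp (2 * π * b * t * I) * f t) γ = 𝓕 f (γ - b) := by
  simp only [fourier_real_eq_integral_exp_smul, smul_eq_mul, ← mul_assoc, ← Complex.exp_add]
  congr 1 with t
  push_cast
  ring_nf

lemma fourier_comp_mul_add (f : ℝ → ℂ) {a : ℝ} (ha : a ≠ 0) (x γ : ℝ) :
    𝓕 (fun t : ℝ => f (a * (t + x))) γ = |a|⁻¹ * cexp (2 * π * x * γ * I) * 𝓕 f (γ / a) := by
  set F : ℝ → ℂ := fun u =>
    cexp (2 * π * x * γ * I) * (cexp (↑(-2 * π * u * (γ / a)) * I) * f u)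
  have hF (t : ℝ) : cexp (↑(-2 * π * t * γ) * I) • f (a * (t + x)) = F (a * t + a * x) := by
    have ha' : (a : ℂ) ≠ 0 := ofReal_ne_zero.2 ha
    simp only [F, smul_eq_mul, ← mul_assoc, ← Complex.exp_add, mul_add]
    congr 2
    push_cast
    field_simp
    ring
  rw [fourier_real_eq_integral_exp_smul, fourier_real_eq_integral_exp_smul]
  simp only [hF]
  rw [Measure.integral_comp_mul_left (fun y => F (y + a * x)), integral_add_right_eq_self F,
    integral_const_mul, Complex.real_smul, abs_inv, Complex.ofReal_inv]
  simp only [smul_eq_mul, mul_assoc]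

lemma _root_.Continuous.even_of_fourier_eq_neg {g : ℝ → ℂ} (hg : Continuous g)
    (hi : Integrable g) (heig : 𝓕 g = -g) : Function.Even g := by
  intro x
  have hinv := congrFun (hg.fourierInv_fourier_eq hi (heig ▸ hi.neg)) (-x)
  rw [fourierInv_eq_fourier_neg, neg_neg, heig, fourier_real_eq] at hinv
  simp only [Pi.neg_apply, smul_neg, integral_neg, ← fourier_real_eq, heig, neg_neg] at hinv
  exact hinv.symm

end Real

theorem HasSum.int_even_add_odd {M : Type*} [AddCommMonoid M] [TopologicalSpace M]
    [ContinuousAdd M] {f : ℤ → M} {a b : M} (he : HasSum (fun k => f (2 * k)) a)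
    (ho : HasSum (fun k => f (2 * k + 1)) b) : HasSum f (a + b) := by
  have := mul_right_injective₀ (two_ne_zero' ℤ)
  replace ho := ((add_left_injective 1).comp this).hasSum_range_iff.2 ho
  refine (this.hasSum_range_iff.2 he).add_isCompl ?_ ho
  simpa [Function.comp_def] using Int.isCompl_even_odd

lemma cexp_int_add_odd_mul_pi_mul_I_add (k : ℤ) {l : ℤ} (hl : Odd l) (x : ℂ) :
    cexp (((k + l : ℤ) : ℂ) * (π * I) + x) = -(-1) ^ k * cexp x := by
  rw [Complex.exp_add, Complex.exp_int_mul, exp_pi_mul_I, zpow_add₀ (by norm_num),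
    hl.neg_one_zpow]
  ring

lemma inv_sqrt_two_mul_cexp_three_pi_div_four_add :
    (√2 : ℂ)⁻¹ * (cexp (-(3 * π / 4) * I) + cexp (3 * π / 4 * I)) = -1 := by
  have hcos : Real.cos (3 * π / 4) = -(√2 / 2) := by
    rw [show 3 * π / 4 = π - π / 4 by ring, Real.cos_pi_sub, Real.cos_pi_div_four]
  have hs0 : (√2 : ℂ) ≠ 0 := ofReal_ne_zero.2 (by positivity)
  rw [add_comm, ← two_cos, show (3 * π / 4 : ℂ) = ((3 * π / 4 : ℝ) : ℂ) by push_cast; ring,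
    ← ofReal_cos, hcos]
  field_simp
  push_cast
  ring

lemma hasSum_dual_series {g : ℝ → ℂ} (heven : Function.Even g) {S : ℂ}
    (hS : HasSum (fun k : ℤ => (-1 : ℂ) ^ k * g (√2 * (k + 3 / 4))) S) :
    HasSum (fun n : ℤ => (√2 : ℂ)⁻¹ * cexp (2 * π * (3 / 4) * (n - 1 / 2) * I) *
      g ((n - 1 / 2) / √2)) S := by
  have hs : √2 * √2 = 2 := Real.mul_self_sqrt zero_le_two
  have hs0 : √2 ≠ 0 := by positivity
  have heven_terms : HasSum (fun m : ℤ => (√2 : ℂ)⁻¹ *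
      cexp (2 * π * (3 / 4) * ((2 * m : ℤ) - 1 / 2) * I) * g (((2 * m : ℤ) - 1 / 2) / √2))
      (-(√2 : ℂ)⁻¹ * cexp (-(3 * π / 4) * I) * S) := by
    have h1 : HasSum (fun m : ℤ => (-1 : ℂ) ^ (m - 1) * g (√2 * ((m - 1 : ℤ) + 3 / 4))) S :=
      (Equiv.subRight (1 : ℤ)).hasSum_iff.2 hS
    refine (h1.mul_left _).congr_fun fun m => ?_
    have harg : (((2 * m : ℤ) : ℝ) - 1 / 2) / √2 = √2 * (((m - 1 : ℤ) : ℝ) + 3 / 4) := by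
      rw [div_eq_iff hs0]; push_cast; linear_combination (1 / 4 - (m : ℝ)) * hs
    have hphase : 2 * π * (3 / 4) * (((2 * m : ℤ) : ℂ) - 1 / 2) * I =
        ((m - 1 + (2 * m + 1) : ℤ) : ℂ) * (π * I) + -(3 * π / 4) * I := by
      push_cast; ring
    rw [harg, hphase, cexp_int_add_odd_mul_pi_mul_I_add _ (odd_two_mul_add_one m)]
    ring
  -- evenness of `g` turns the odd-indexed terms back into the original series
  have hodd_terms : HasSum (fun m : ℤ => (√2 : ℂ)⁻¹ *
      cexp (2 * π * (3 / 4) * ((2 * m + 1 : ℤ) - 1 / 2) * I) *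
      g (((2 * m + 1 : ℤ) - 1 / 2) / √2)) (-(√2 : ℂ)⁻¹ * cexp (3 * π / 4 * I) * S) := by
    have h1 : HasSum (fun m : ℤ => (-1 : ℂ) ^ (-1 - m) * g (√2 * ((-1 - m : ℤ) + 3 / 4))) S :=
      (Equiv.subLeft (-1 : ℤ)).hasSum_iff
        (f := fun k : ℤ => (-1 : ℂ) ^ k * g (√2 * (k + 3 / 4))) |>.2 hS
    refine (h1.mul_left _).congr_fun fun m => ?_
    have harg : (((2 * m + 1 : ℤ) : ℝ) - 1 / 2) / √2 = -(√2 * (((-1 - m : ℤ) : ℝ) + 3 / 4)) := by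
      rw [div_eq_iff hs0]; push_cast; linear_combination (-1 / 4 - (m : ℝ)) * hs
    have hphase : 2 * π * (3 / 4) * (((2 * m + 1 : ℤ) : ℂ) - 1 / 2) * I =
        ((-1 - m + (2 * (2 * m) + 1) : ℤ) : ℂ) * (π * I) + 3 * π / 4 * I := by
      push_cast; ring
    rw [harg, heven, hphase, cexp_int_add_odd_mul_pi_mul_I_add _ (odd_two_mul_add_one _)]
    ring
  have hcoeff : -(√2 : ℂ)⁻¹ * cexp (-(3 * π / 4) * I) + -(√2 : ℂ)⁻¹ * cexp (3 * π / 4 * I) = 1 := by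
    linear_combination -inv_sqrt_two_mul_cexp_three_pi_div_four_add
  simpa only [← add_mul, hcoeff, one_mul] using
    HasSum.int_even_add_odd (f := fun n : ℤ => (√2 : ℂ)⁻¹ *
      cexp (2 * π * (3 / 4) * (n - 1 / 2) * I) * g ((n - 1 / 2) / √2)) heven_terms hodd_terms

theorem sum_eigen_neg_one_three_quarter (g : ℝ → ℂ) (hg : Continuous g) (hW : InWiener g)
    (heig : ∀ γ : ℝ, 𝓕 g γ = -g γ) :
    ∑' k : ℤ, (-1 : ℂ) ^ k * g (Real.sqrt 2 * ((k : ℝ) + 3/4)) = 0 := by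
  have hs : 1 ≤ √2 := Real.one_le_sqrt.2 one_le_two
  have heven : Function.Even g := hg.even_of_fourier_eq_neg (hW.integrable_s7 hg) (funext heig)
  let h : C(ℝ, ℂ) := ⟨fun t => cexp (2 * π * (1 / 2 : ℝ) * t * I) * g (√2 * (t + 3 / 4)),
    by fun_prop⟩
  have h_norm (t : ℝ) : ‖h t‖ ≤ ‖g (√2 * t + √2 * (3 / 4))‖ := by
    simp [h, norm_exp, mul_add]
  have h_int (n : ℤ) : h n = (-1) ^ n * g (√2 * (n + 3 / 4)) := by
    simp only [h, ContinuousMap.coe_mk]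
    rw [show (2 * π * (1 / 2 : ℝ) * ((n : ℝ) : ℂ) * I : ℂ) = n * (π * I) by push_cast; ring,
      exp_int_mul, exp_pi_mul_I]
  set S := ∑' k : ℤ, (-1 : ℂ) ^ k * g (√2 * ((k : ℝ) + 3 / 4))
  have hS : HasSum (fun k : ℤ => (-1 : ℂ) ^ k * g (√2 * (k + 3 / 4))) S :=
    (Summable.of_norm <| (hW.summable_norm_comp_mul_add hg hs (√2 * (3 / 4))).congr
      fun n => by simp [mul_add]).hasSum
  have hdual : HasSum (fun n : ℤ => 𝓕 ⇑h n) (-S) := by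
    refine (hasSum_dual_series heven hS).neg.congr_fun fun n => ?_
    simp only [h, ContinuousMap.coe_mk]
    rw [Real.fourier_cexp_mul, Real.fourier_comp_mul_add g (by positivity),
      abs_of_pos (by positivity), heig]
    push_cast
    ring
  have hPoisson : S = -S := by
    simpa [h_int, hS.tsum_eq, hdual.tsum_eq] using Real.tsum_eq_tsum_fourier
      (hW.summable_norm_restrict_s7 hg hs _ h_norm) hdual.summable 0
  exact self_eq_neg.1 hPoisson
end

section
/- Let g : ℝ → ℂ be a continuous Wiener-space function with ĝ = i·g. Then ∑_{k∈ℤ} g(√3·(k + 1/3)) = 0. -/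
open MeasureTheory Complex Real FourierTransform

/-!
Write `S_r = ∑_m g(√3 (m + r/3))`. The dual lattice of `√3 ℤ` is `ℤ/√3`, and its points `n/√3`
with `n ≡ r (mod 3)` are exactly the points `√3 (m + r/3)`. Hence Poisson summation for
`x ↦ g(√3 x)` at `x = j/3`, together with `ĝ = i g`, says `S_j = (i/√3) ∑_r ω^{rj} S_r` with
`ω = e^{2πi/3}`: `S` is an eigenvector of the 3 × 3 DFT matrix with eigenvalue `-i√3`. The
equations for `j = 1, 2` give `S_1 = S_2`, and then those for `j = 0, 1` force `S_1 = 0`.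
The Wiener condition is what makes Poisson summation apply to `g(a ·)` for `a ≥ 1` and makes all
these sums converge absolutely.
-/

theorem Int.hasSum_of_hasSum_mul_add {E : Type*} [AddCommMonoid E] [TopologicalSpace E]
    [ContinuousAdd E] (q : ℕ) [NeZero q] {f : ℤ → E} {s : Fin q → E}
    (hf : ∀ r : Fin q, HasSum (fun m : ℤ => f (m * q + r)) (s r)) :
    HasSum f (∑ r, s r) := by
  rw [← (Int.divModEquiv q).symm.hasSum_iff]
  have hr : ∀ r : Fin q, HasSum (fun p : ℤ × Fin q => if p.2 = r then f (p.1 * q + p.2) else 0)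
      (s r) := by
    intro r
    rw [← (Prod.mk_left_injective r).hasSum_iff]
    · simpa [Function.comp_def] using hf r
    · rintro ⟨m, r'⟩ hp
      exact if_neg fun h => hp ⟨m, by simp [← h]⟩
  convert hasSum_sum fun r _ => hr r using 1
  ext ⟨m, r⟩
  simp

theorem fourier_comp_mul_left (g : ℝ → ℂ) {a : ℝ} (ha : 0 < a) (γ : ℝ) :
    𝓕 (fun x => g (a * x)) γ = (a : ℂ)⁻¹ * 𝓕 g (γ / a) := by
  rw [Real.fourier_real_eq, Real.fourier_real_eq]
  have hcomp : (fun v : ℝ => 𝐞 (-(v * γ)) • g (a * v))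
      = fun v : ℝ => (fun u : ℝ => 𝐞 (-(u * (γ / a))) • g u) (a * v) := by
    funext v
    congr 3
    field_simp
  rw [hcomp, Measure.integral_comp_mul_left (fun u => 𝐞 (-(u * (γ / a))) • g u) a,
    abs_of_pos (inv_pos.mpr ha), ← Complex.coe_smul, Complex.ofReal_inv, smul_eq_mul]

/-- `InWiener g` is by definition `Summable (localSup g)`. -/
noncomputable def localSup (g : ℝ → ℂ) (k : ℤ) : ℝ :=
  ⨆ x : Set.Icc (0:ℝ) 1, ‖g (x + k)‖

section Wiener

variable {g : ℝ → ℂ}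

lemma localSup_nonneg (k : ℤ) : 0 ≤ localSup g k :=
  Real.iSup_nonneg fun _ => norm_nonneg _

lemma norm_le_localSup_floor (hg : Continuous g) (t : ℝ) : ‖g t‖ ≤ localSup g ⌊t⌋ := by
  have hbdd : BddAbove (Set.range fun x : Set.Icc (0:ℝ) 1 => ‖g (x + ⌊t⌋)‖) :=
    (isCompact_range (by fun_prop)).bddAbove
  simpa [localSup, Int.fract_add_floor] using
    le_ciSup hbdd ⟨Int.fract t, Int.fract_nonneg t, (Int.fract_lt_one t).le⟩

lemma norm_le_sum_localSup (hg : Continuous g) {c t : ℝ} {N : ℕ} (h : |t - c| ≤ N) :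
    ‖g t‖ ≤ ∑ j ∈ Finset.Icc (-(N : ℤ)) N, localSup g (⌊c⌋ + j) := by
  rw [abs_le] at h
  have hlo : ⌊c⌋ - N ≤ ⌊t⌋ := by
    rw [← Int.floor_sub_natCast]; exact Int.floor_mono (by linarith)
  have hhi : ⌊t⌋ ≤ ⌊c⌋ + N := by
    rw [← Int.floor_add_natCast]; exact Int.floor_mono (by linarith)
  calc ‖g t‖ ≤ localSup g (⌊c⌋ + (⌊t⌋ - ⌊c⌋)) := by
        rw [add_sub_cancel]; exact norm_le_localSup_floor hg t
    _ ≤ _ := Finset.single_le_sum (fun j _ => localSup_nonneg _)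
        (Finset.mem_Icc.mpr ⟨by omega, by omega⟩)

lemma strictMono_floor_mul_add {a : ℝ} (ha : 1 ≤ a) (b : ℝ) :
    StrictMono fun n : ℤ => ⌊a * n + b⌋ := by
  intro n m hnm
  have hstep : a * n + b + 1 ≤ a * m + b := by
    have : (n : ℝ) + 1 ≤ m := by exact_mod_cast hnm
    nlinarith
  calc ⌊a * n + b⌋ < ⌊a * n + b⌋ + 1 := lt_add_one _
    _ = ⌊a * n + b + 1⌋ := (Int.floor_add_one _).symm
    _ ≤ ⌊a * m + b⌋ := Int.floor_mono hstep

namespace InWiener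

variable {a : ℝ}

lemma summable_localSup_floor (hW : InWiener g) (ha : 1 ≤ a) (b : ℝ) (j : ℤ) :
    Summable fun n : ℤ => localSup g (⌊a * n + b⌋ + j) :=
  (hW.comp_injective (add_left_injective j)).comp_injective
    (strictMono_floor_mul_add ha b).injective

lemma summable_norm_comp_mul_add_s10 (hg : Continuous g) (hW : InWiener g) (ha : 1 ≤ a) (b : ℝ) :
    Summable fun n : ℤ => ‖g (a * n + b)‖ :=
  .of_nonneg_of_le (fun _ => norm_nonneg _) (fun _ => by simpa using norm_le_localSup_floor hg _)
    (hW.summable_localSup_floor ha b 0)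

lemma summable_norm_restrict_comp_mul (hg : Continuous g) (hW : InWiener g) (ha : 1 ≤ a)
    (K : TopologicalSpace.Compacts ℝ) :
    Summable fun n : ℤ => ‖((⟨fun x => g (a * x), by fun_prop⟩ : C(ℝ, ℂ)).comp
      (ContinuousMap.addRight (n : ℝ))).restrict K‖ := by
  obtain ⟨r, hr⟩ := K.isCompact.isBounded.subset_closedBall 0
  obtain ⟨N, hN⟩ := exists_nat_ge (a * r)
  refine .of_nonneg_of_le (fun _ => norm_nonneg _) (fun n => ?_)
    (summable_sum fun j (_ : j ∈ Finset.Icc (-(N : ℤ)) N) => hW.summable_localSup_floor ha 0 j)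
  refine (ContinuousMap.norm_le _ (Finset.sum_nonneg fun j _ => localSup_nonneg _)).mpr
    fun ⟨y, hy⟩ => norm_le_sum_localSup hg ?_
  have hy : |y| ≤ r := by simpa using hr hy
  calc |a * (y + n) - (a * n + 0)| = a * |y| := by
        rw [show a * (y + n) - (a * n + 0) = a * y by ring, abs_mul, abs_of_pos (by linarith)]
    _ ≤ a * r := by gcongr
    _ ≤ N := hN

theorem tsum_comp_mul_eq_tsum_fourier (hg : Continuous g) (hW : InWiener g) (ha : 1 ≤ a)
    (hĝ : Summable fun n : ℤ => 𝓕 g (n / a)) (x : ℝ) :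
    ∑' n : ℤ, g (a * (x + n))
      = ∑' n : ℤ, (a : ℂ)⁻¹ * 𝓕 g (n / a) * Complex.exp (2 * π * I * n * x) := by
  let F : C(ℝ, ℂ) := ⟨fun x => g (a * x), by fun_prop⟩
  have hF : ∀ γ, 𝓕 (F : ℝ → ℂ) γ = (a : ℂ)⁻¹ * 𝓕 g (γ / a) :=
    fourier_comp_mul_left g (by linarith)
  have := Real.tsum_eq_tsum_fourier (f := F) (hW.summable_norm_restrict_comp_mul hg ha)
    (by simpa only [hF] using hĝ.mul_left _) x
  simp only [hF, fourier_coe_apply, Complex.ofReal_one, div_one] at this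
  exact this

end InWiener

end Wiener

local notation "ω" => Complex.exp (2 * π * I / 3)

lemma exp_two_pi_I_div_three : ω = (-1 + √3 * I) / 2 := by
  rw [show 2 * (π : ℂ) * I / 3 = ((π - π / 3 : ℝ) : ℂ) * I by push_cast; ring, Complex.exp_mul_I,
    ← Complex.ofReal_cos, ← Complex.ofReal_sin, Real.cos_pi_sub, Real.sin_pi_sub,
    Real.cos_pi_div_three, Real.sin_pi_div_three]
  push_cast
  ring

lemma dft_three_eigen_apply_one_eq_zero {S : ℕ → ℂ}
    (h : ∀ j : ℕ, S j = I / √3 * ∑ r : Fin 3, ω ^ ((r : ℕ) * j) * S r) : S 1 = 0 := by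
  have hs : (√3 : ℂ) ^ 2 = 3 := by norm_cast; simp
  have hs0 : (√3 : ℂ) ≠ 0 := by norm_cast; positivity
  have hω2 : ω ^ 2 = (-1 - √3 * I) / 2 := by
    rw [exp_two_pi_I_div_three]; linear_combination I ^ 2 / 4 * hs + (3/4 : ℂ) * I_sq
  have hω4 : ω ^ 4 = ω := by
    rw [show ω ^ 4 = (ω ^ 2) ^ 2 by ring, hω2, exp_two_pi_I_div_three]
    linear_combination I ^ 2 / 4 * hs + (3/4 : ℂ) * I_sq
  have e : ∀ j, √3 * S j = I * ∑ r : Fin 3, ω ^ ((r : ℕ) * j) * S r := fun j => by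
    rw [h j]; field_simp
  have e0 := e 0
  have e1 := e 1
  have e2 := e 2
  simp only [Fin.sum_univ_three, Fin.isValue, Fin.coe_ofNat_eq_mod, Nat.zero_mod, Nat.one_mod,
    Nat.mod_succ, Nat.reduceMul, mul_zero, zero_mul, mul_one, one_mul, pow_zero, pow_one, hω2, hω4]
    at e0 e1 e2
  rw [exp_two_pi_I_div_three] at e1 e2
  have h12 : S 1 = S 2 := by
    have h : (2 * √3 : ℂ) * (S 1 - S 2) = 0 := by
      linear_combination e1 - e2 + √3 * (S 1 - S 2) * I_sq
    simpa [hs0, sub_eq_zero] using h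
  rw [← h12] at e0 e1
  -- `i e₀ + (√3 - i) e₁` eliminates `S 0` and leaves `6 S 1 = 0`.
  linear_combination (I * e0 + (√3 - I) * e1 - S 1 * hs + 3 * S 1 * I_sq) / 6

noncomputable def cosetSum (g : ℝ → ℂ) (r : ℕ) : ℂ :=
  ∑' m : ℤ, g (√3 * (m + r / 3))

lemma intCast_mul_three_add_div_sqrt_three (m : ℤ) (r : ℕ) :
    ((m * 3 + r : ℤ) : ℝ) / √3 = √3 * (m + r / 3) := by
  have hs : √3 * √3 = 3 := Real.mul_self_sqrt (by norm_num)
  have hs0 : √3 ≠ 0 := by positivity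
  field_simp
  push_cast
  linear_combination (-(m * 3 + r : ℝ)) * hs

lemma exp_mul_three_add_mul_div_three (m : ℤ) (r j : ℕ) :
    Complex.exp (2 * π * I * ((m * 3 + r : ℤ) : ℂ) * ((j / 3 : ℝ) : ℂ)) = ω ^ (r * j) := by
  rw [← Complex.exp_nat_mul,
    show 2 * π * I * ((m * 3 + r : ℤ) : ℂ) * ((j / 3 : ℝ) : ℂ)
      = (m * j : ℤ) * (2 * π * I) + (r * j : ℕ) * (2 * π * I / 3) by push_cast; ring,
    Complex.exp_add, Complex.exp_int_mul_two_pi_mul_I, one_mul]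

section Coset

variable {g : ℝ → ℂ}

lemma InWiener.hasSum_cosetSum (hg : Continuous g) (hW : InWiener g) (r : ℕ) :
    HasSum (fun m : ℤ => g (√3 * (m + r / 3))) (cosetSum g r) := by
  refine (Summable.of_norm ?_).hasSum
  simpa only [mul_add] using hW.summable_norm_comp_mul_add_s10 hg (by simp) (√3 * (r / 3))

lemma InWiener.hasSum_comp_div_sqrt_three_mul_exp (hg : Continuous g) (hW : InWiener g)
    (j : ℕ) :
    HasSum (fun n : ℤ => g (n / √3) * Complex.exp (2 * π * I * n * ((j / 3 : ℝ) : ℂ)))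
      (∑ r : Fin 3, ω ^ ((r : ℕ) * j) * cosetSum g r) := by
  refine Int.hasSum_of_hasSum_mul_add 3 fun r => ?_
  refine ((hW.hasSum_cosetSum hg r).mul_left (ω ^ ((r : ℕ) * j))).congr_fun fun m => ?_
  have hpt := intCast_mul_three_add_div_sqrt_three m r
  have hexp := exp_mul_three_add_mul_div_three m r j
  push_cast at hpt hexp ⊢
  rw [hpt, hexp, mul_comm]

lemma cosetSum_eq_I_div_sqrt_three_mul_dft (hg : Continuous g) (hW : InWiener g)
    (heig : ∀ γ : ℝ, 𝓕 g γ = I * g γ) (j : ℕ) :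
    cosetSum g j = I / √3 * ∑ r : Fin 3, ω ^ ((r : ℕ) * j) * cosetSum g r := by
  have hsum := hW.hasSum_comp_div_sqrt_three_mul_exp hg
  have hĝ : Summable fun n : ℤ => 𝓕 g (n / √3) := by
    simpa [heig] using (hsum 0).summable.mul_left I
  calc cosetSum g j = ∑' n : ℤ, g (√3 * ((j / 3 : ℝ) + n)) :=
        tsum_congr fun n => by rw [add_comm]
    _ = ∑' n : ℤ, (√3 : ℂ)⁻¹ * 𝓕 g (n / √3) * Complex.exp (2 * π * I * n * ((j / 3 : ℝ) : ℂ)) :=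
        hW.tsum_comp_mul_eq_tsum_fourier hg (by simp) hĝ _
    _ = I / √3 * ∑' n : ℤ, g (n / √3) * Complex.exp (2 * π * I * n * ((j / 3 : ℝ) : ℂ)) := by
        rw [← tsum_mul_left]
        exact tsum_congr fun n => by rw [heig]; ring
    _ = _ := by rw [(hsum j).tsum_eq]

end Coset

theorem sum_eigen_i_sqrt_three (g : ℝ → ℂ) (hg : Continuous g) (hW : InWiener g)
    (heig : ∀ γ : ℝ, 𝓕 g γ = Complex.I * g γ) :
    ∑' k : ℤ, g (Real.sqrt 3 * ((k : ℝ) + 1/3)) = 0 := by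
  simpa [cosetSum] using
    dft_three_eigen_apply_one_eq_zero (cosetSum_eq_I_div_sqrt_three_mul_dft hg hW heig)
end

section
/- The Hermite function h_n(x) = c_n^{−1/2} e^{πx²} (d/dx)^n e^{−2πx²}, with c_n = (2π)^n 2^{n−1/2} n!, is an eigenfunction of the Fourier transform: ĥ_n(γ) = (−i)^n h_n(γ) for all γ ∈ ℝ. -/
open MeasureTheory Complex Real FourierTransform

/-- The `n`-th Hermite function `h_n(x) = c_n^{-1/2} e^{π x²} (d/dx)^n e^{-2π x²}`
with `c_n = (2π)^n 2^{n-1/2} n!`. -/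
noncomputable def hermiteFun (n : ℕ) (x : ℝ) : ℝ :=
  ((2 * Real.pi) ^ n * (2:ℝ) ^ ((n : ℝ) - 1/2) * (n.factorial : ℝ)) ^ (-(1/2 : ℝ)) *
    Real.exp (Real.pi * x ^ 2) * iteratedDeriv n (fun t => Real.exp (-2 * Real.pi * t ^ 2)) x

/-!
The operator `A f = f' - 2πx f` satisfies `𝓕 (A f) = -i A (𝓕 f)`, since `𝓕` turns `d/dx` into
multiplication by `2πiγ` and multiplication by `x` into `(i/2π) d/dγ`. Differentiating
`e^{-2πx²} = e^{-πx²} e^{-πx²}` shows `e^{πx²} (d/dx)ⁿ e^{-2πx²} = Aⁿ e^{-πx²}`, so `h_n` is a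
multiple of `Aⁿ e^{-πx²}`, and `e^{-πx²}` is its own Fourier transform. Every `Aⁿ e^{-πx²}` is a
polynomial times `e^{-πx²}`, which gives the integrability the Fourier identities need.
-/

open Polynomial

noncomputable section

-- Minus the creation operator `2πx - d/dx` of the harmonic oscillator.
def creation (f : ℝ → ℂ) (x : ℝ) : ℂ := deriv f x - 2 * π * x * f x

namespace Real

theorem fourier_const_smul (c : ℂ) (f : ℝ → ℂ) : 𝓕 (c • f) = c • 𝓕 f :=
  VectorFourier.fourierIntegral_const_smul _ _ _ f c

theorem fourier_sub {f g : ℝ → ℂ} (hf : Integrable f) (hg : Integrable g) :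
    𝓕 (f - g) = 𝓕 f - 𝓕 g := by
  ext γ
  simp_rw [fourier_eq, Pi.sub_apply, smul_sub]
  exact integral_sub ((fourierIntegral_convergent_iff γ).2 hf)
    ((fourierIntegral_convergent_iff γ).2 hg)

end Real

theorem creation_const_smul {f : ℝ → ℂ} (hf : Differentiable ℝ f) (c : ℂ) :
    creation (c • f) = c • creation f := by
  ext x
  simp only [creation, Pi.smul_apply, smul_eq_mul, deriv_const_smul c (hf x)]
  ring

theorem fourier_creation {f : ℝ → ℂ} (hf : Integrable f) (hxf : Integrable fun x : ℝ ↦ x • f x)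
    (hf_diff : Differentiable ℝ f) (hf' : Integrable (deriv f)) :
    𝓕 (creation f) = -I • creation (𝓕 f) := by
  have hsplit : creation f = deriv f - (2 * π : ℂ) • fun x : ℝ ↦ x • f x := by
    ext x; simp [creation, mul_assoc]
  have hderiv : deriv (𝓕 f) = (-2 * π * I : ℂ) • 𝓕 fun x : ℝ ↦ x • f x := by
    rw [Real.deriv_fourier hf hxf, ← Real.fourier_const_smul]
    congr 1; ext x; simp [mul_assoc]
  rw [hsplit, Real.fourier_sub hf' (hxf.smul (2 * π : ℂ)), Real.fourier_deriv hf hf_diff hf',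
    Real.fourier_const_smul]
  ext γ
  simp only [creation, hderiv, Pi.sub_apply, Pi.smul_apply, smul_eq_mul, real_smul]
  linear_combination (-2 * π * 𝓕 (fun x : ℝ ↦ x • f x) γ) * I_sq

def polyGaussian (a : ℝ) (P : ℝ[X]) (x : ℝ) : ℝ := P.eval x * Real.exp (-a * x ^ 2)

def gaussianDerivPoly (a : ℝ) (P : ℝ[X]) : ℝ[X] := derivative P - C (2 * a) * X * P

theorem hasDerivAt_polyGaussian (a : ℝ) (P : ℝ[X]) (x : ℝ) :
    HasDerivAt (polyGaussian a P) (polyGaussian a (gaussianDerivPoly a P) x) x := by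
  have hexp : HasDerivAt (fun t ↦ Real.exp (-a * t ^ 2))
      (-2 * a * x * Real.exp (-a * x ^ 2)) x := by
    convert ((hasDerivAt_pow 2 x).const_mul (-a)).exp using 1
    ring
  refine ((P.hasDerivAt x).mul hexp).congr_deriv ?_
  simp only [polyGaussian, gaussianDerivPoly, eval_sub, eval_mul, eval_C, eval_X]
  ring

theorem deriv_polyGaussian (a : ℝ) (P : ℝ[X]) :
    deriv (polyGaussian a P) = polyGaussian a (gaussianDerivPoly a P) :=
  funext fun x ↦ (hasDerivAt_polyGaussian a P x).deriv

theorem iteratedDeriv_polyGaussian (a : ℝ) (n : ℕ) (P : ℝ[X]) :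
    iteratedDeriv n (polyGaussian a P) = polyGaussian a ((gaussianDerivPoly a)^[n] P) := by
  induction n generalizing P with
  | zero => rfl
  | succ n ih => rw [iteratedDeriv_succ', deriv_polyGaussian, ih, Function.iterate_succ_apply]

theorem integrable_polyGaussian {a : ℝ} (ha : 0 < a) (P : ℝ[X]) :
    Integrable (polyGaussian a P) := by
  have hmonomial (i : ℕ) : Integrable fun x : ℝ ↦ x ^ i * Real.exp (-a * x ^ 2) := by
    simpa [Real.rpow_natCast] using
      integrable_rpow_mul_exp_neg_mul_sq ha (s := i) (by linarith [i.cast_nonneg (α := ℝ)])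
  have hsum : polyGaussian a P = fun x ↦ ∑ i ∈ Finset.range (P.natDegree + 1),
      P.coeff i * (x ^ i * Real.exp (-a * x ^ 2)) := by
    ext x
    simp [polyGaussian, eval_eq_sum_range, Finset.sum_mul, mul_assoc]
  rw [hsum]
  exact integrable_finsetSum _ fun i _ ↦ (hmonomial i).const_mul _

theorem hasDerivAt_ofReal_polyGaussian (a : ℝ) (P : ℝ[X]) (x : ℝ) :
    HasDerivAt (fun t ↦ (polyGaussian a P t : ℂ)) (polyGaussian a (gaussianDerivPoly a P) x) x :=
  (hasDerivAt_polyGaussian a P x).ofReal_comp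

theorem creation_ofReal_polyGaussian (P : ℝ[X]) :
    creation (fun x ↦ (polyGaussian π P x : ℂ)) =
      fun x ↦ (polyGaussian π (gaussianDerivPoly (2 * π) P) x : ℂ) := by
  ext x
  rw [creation, (hasDerivAt_ofReal_polyGaussian π P x).deriv]
  simp only [polyGaussian, gaussianDerivPoly, eval_sub, eval_mul, eval_C, eval_X]
  push_cast
  ring

theorem fourier_creation_ofReal_polyGaussian (P : ℝ[X]) :
    𝓕 (creation fun x ↦ (polyGaussian π P x : ℂ)) =
      -I • creation (𝓕 fun x ↦ (polyGaussian π P x : ℂ)) := by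
  have hxf : Integrable fun x : ℝ ↦ x • (polyGaussian π P x : ℂ) := by
    refine (integrable_polyGaussian pi_pos (X * P)).ofReal.congr (.of_forall fun x ↦ ?_)
    simp [polyGaussian, mul_assoc]
  have hderiv : deriv (fun x ↦ (polyGaussian π P x : ℂ)) =
      fun x ↦ (polyGaussian π (gaussianDerivPoly π P) x : ℂ) :=
    funext fun x ↦ (hasDerivAt_ofReal_polyGaussian π P x).deriv
  refine fourier_creation (integrable_polyGaussian pi_pos P).ofReal hxf
    (fun x ↦ (hasDerivAt_ofReal_polyGaussian π P x).differentiableAt) ?_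
  rw [hderiv]
  exact (integrable_polyGaussian pi_pos _).ofReal

def hermitePoly (n : ℕ) : ℝ[X] := (gaussianDerivPoly (2 * π))^[n] 1

theorem fourier_ofReal_polyGaussian_hermitePoly (n : ℕ) :
    𝓕 (fun x ↦ (polyGaussian π (hermitePoly n) x : ℂ)) =
      (-I) ^ n • fun x ↦ (polyGaussian π (hermitePoly n) x : ℂ) := by
  induction n with
  | zero =>
    have hgauss : (fun x ↦ (polyGaussian π (hermitePoly 0) x : ℂ)) =
        fun x : ℝ ↦ cexp (-π * 1 * x ^ 2) := by
      ext x; simp [polyGaussian, hermitePoly]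
    rw [hgauss, fourier_gaussian_pi (by simp)]
    ext x; simp
  | succ n ih =>
    rw [hermitePoly, Function.iterate_succ_apply', ← hermitePoly, ← creation_ofReal_polyGaussian,
      fourier_creation_ofReal_polyGaussian, ih, creation_const_smul
        (fun x ↦ (hasDerivAt_ofReal_polyGaussian π _ x).differentiableAt), smul_smul, pow_succ']

theorem iteratedDeriv_exp_neg_two_pi_mul_sq (n : ℕ) :
    iteratedDeriv n (fun t ↦ Real.exp (-2 * π * t ^ 2)) =
      polyGaussian (2 * π) (hermitePoly n) := by
  rw [hermitePoly, ← iteratedDeriv_polyGaussian]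
  congr 1
  ext t
  simp [polyGaussian]

theorem exists_hermiteFun_eq_mul_polyGaussian (n : ℕ) :
    ∃ c : ℝ, ∀ x, hermiteFun n x = c * polyGaussian π (hermitePoly n) x := by
  simp_rw [hermiteFun, iteratedDeriv_exp_neg_two_pi_mul_sq, mul_assoc]
  refine ⟨_, fun x ↦ congrArg _ ?_⟩
  simp only [polyGaussian]
  rw [mul_left_comm, ← Real.exp_add]
  ring_nf

end

theorem hermite_fourier_eigen (n : ℕ) :
    ∀ γ : ℝ, 𝓕 (fun x : ℝ => (hermiteFun n x : ℂ)) γ = (-Complex.I) ^ n * (hermiteFun n γ : ℂ) := by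
  obtain ⟨c, hc⟩ := exists_hermiteFun_eq_mul_polyGaussian n
  have hcast : (fun x : ℝ ↦ (hermiteFun n x : ℂ)) =
      (c : ℂ) • fun x ↦ (polyGaussian π (hermitePoly n) x : ℂ) := by
    ext x; simp [hc]
  intro γ
  rw [hcast, Real.fourier_const_smul, fourier_ofReal_polyGaussian_hermitePoly, hc]
  simp only [Pi.smul_apply, smul_eq_mul, ofReal_mul]
  ring
end
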